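/- arXiv:1910.09276 — 4 statements merged into one kernel-verified Lean document; each statement's English description precedes it below -/
import Mathlib

section
/- With ψ, ψ*, Φ, and the Fenchel coupling F as defined, for all p ∈ X and y, y' ∈ ℝ^D: F(p, y') ≤ F(p, y) + ⟨y' - y, Φ(y) - p⟩ + (1/(2K))‖y' - y‖²_*, where ‖·‖_* is the dual norm. -/
/-!
Write `x = Φ y`, `x' = Φ y'`. Unfolding `F` and `ψ*`, the claim says
`⟪y' - y, x' - x⟫ - (ψ x' - ψ x - ⟪y, x' - x⟫) ≤ ‖y' - y‖²_* / (2K)`.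
Since `x` maximises `⟪y, ·⟫ - ψ` over the convex set `X`, strong convexity gives
`ψ x' - ψ x - ⟪y, x' - x⟫ ≥ (K/2) N(x' - x)²`; the pairing bound `⟪z, v⟫ ≤ ‖z‖_* N v` and
`ab - (K/2) b² ≤ a²/(2K)` then finish. The dual norm is a genuine supremum because, in finite
dimension, `N` dominates a multiple of the Euclidean norm.
-/

open scoped InnerProductSpace Topology

open Set Filter

section FiniteDimensional

variable {E : Type*} [NormedAddCommGroup E] [NormedSpace ℝ E] [FiniteDimensional ℝ E]

theorem Seminorm.exists_pos_mul_norm_le (p : Seminorm ℝ E) (hp : ∀ x, x ≠ 0 → 0 < p x) :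
    ∃ c > 0, ∀ x, c * ‖x‖ ≤ p x := by
  rcases subsingleton_or_nontrivial E with _ | _
  · exact ⟨1, one_pos, fun x => by simp [Subsingleton.elim x 0]⟩
  -- `p` is convex, hence continuous in finite dimension, so it attains a minimum on the unit sphere.
  obtain ⟨x₀, hx₀, hmin⟩ := (isCompact_sphere (0 : E) 1).exists_isMinOn
    (NormedSpace.sphere_nonempty.2 zero_le_one) p.convexOn.locallyLipschitz.continuous.continuousOn
  have hx₀ : ‖x₀‖ = 1 := mem_sphere_zero_iff_norm.1 hx₀
  refine ⟨p x₀, hp x₀ (norm_ne_zero_iff.1 (by simp [hx₀])), fun x => ?_⟩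
  rcases eq_or_ne x 0 with rfl | hx
  · simp
  have hunit : ‖x‖⁻¹ • x ∈ Metric.sphere (0 : E) 1 := by simp [norm_smul, hx]
  calc p x₀ * ‖x‖ ≤ p (‖x‖⁻¹ • x) * ‖x‖ := by gcongr; exact hmin hunit
    _ = p x := by
      rw [map_smul_eq_mul, norm_inv, norm_norm]
      field_simp

end FiniteDimensional

section DualNorm

variable {E : Type*} [NormedAddCommGroup E] [InnerProductSpace ℝ E]

noncomputable def dualNorm (N : E → ℝ) (z : E) : ℝ :=
  sSup ((fun x => ⟪z, x⟫_ℝ) '' {x | N x ≤ 1})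

variable [FiniteDimensional ℝ E] (p : Seminorm ℝ E)

theorem Seminorm.bddAbove_inner_image_unitBall (hp : ∀ x, x ≠ 0 → 0 < p x) (z : E) :
    BddAbove ((fun x => ⟪z, x⟫_ℝ) '' {x | p x ≤ 1}) := by
  obtain ⟨c, hc, hcp⟩ := p.exists_pos_mul_norm_le hp
  refine ⟨‖z‖ * c⁻¹, ?_⟩
  rintro _ ⟨x, hx, rfl⟩
  have hx' : ‖x‖ ≤ c⁻¹ := by
    rw [← one_div, le_div_iff₀' hc]
    exact (hcp x).trans hx
  calc ⟪z, x⟫_ℝ ≤ ‖z‖ * ‖x‖ := real_inner_le_norm z x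
    _ ≤ ‖z‖ * c⁻¹ := by gcongr

theorem Seminorm.inner_le_dualNorm_mul (hp : ∀ x, x ≠ 0 → 0 < p x) (z v : E) :
    ⟪z, v⟫_ℝ ≤ dualNorm p z * p v := by
  rcases eq_or_ne v 0 with rfl | hv
  · simp
  have hpv := hp v hv
  have hmem : (p v)⁻¹ • v ∈ {x | p x ≤ 1} := by
    simp [map_smul_eq_mul, abs_of_pos hpv, hpv.ne']
  have hle : ⟪z, (p v)⁻¹ • v⟫_ℝ ≤ dualNorm p z :=
    le_csSup (p.bddAbove_inner_image_unitBall hp z) ⟨_, hmem, rfl⟩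
  rw [real_inner_smul_right, inv_mul_le_iff₀ hpv] at hle
  linarith

end DualNorm

theorem inner_sub_le_of_isMaxOn {E : Type*} [NormedAddCommGroup E] [InnerProductSpace ℝ E]
    {X : Set E} (hX : Convex ℝ X) {ψ N : E → ℝ} {K : ℝ}
    (hψ : ∀ x ∈ X, ∀ y ∈ X, ∀ l ∈ Icc (0:ℝ) 1,
      ψ (l • x + (1 - l) • y) ≤ l * ψ x + (1 - l) * ψ y - K / 2 * l * (1 - l) * (N (x - y))^2)
    {y x x' : E} (hx : x ∈ X) (hmax : IsMaxOn (fun x => ⟪y, x⟫_ℝ - ψ x) X x) (hx' : x' ∈ X) :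
    ⟪y, x' - x⟫_ℝ ≤ ψ x' - ψ x - K / 2 * N (x' - x) ^ 2 := by
  -- compare `x` with the points `x + l • (x' - x)` and let `l → 0⁺`
  have hstep : ∀ l ∈ Ioc (0:ℝ) 1,
      ⟪y, x' - x⟫_ℝ ≤ ψ x' - ψ x - K / 2 * (1 - l) * N (x' - x) ^ 2 := by
    rintro l ⟨hl0, hl1⟩
    have hopt : ⟪y, l • x' + (1 - l) • x⟫_ℝ - ψ (l • x' + (1 - l) • x) ≤ ⟪y, x⟫_ℝ - ψ x :=
      hmax (hX hx' hx hl0.le (sub_nonneg.2 hl1) (add_sub_cancel l 1))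
    have hconv := hψ x' hx' x hx l ⟨hl0.le, hl1⟩
    have hlin : ⟪y, l • x' + (1 - l) • x⟫_ℝ = ⟪y, x⟫_ℝ + l * ⟪y, x' - x⟫_ℝ := by
      simp only [inner_add_right, inner_sub_right, real_inner_smul_right]; ring
    rw [hlin] at hopt
    have hscaled : l * ⟪y, x' - x⟫_ℝ ≤ l * (ψ x' - ψ x - K / 2 * (1 - l) * N (x' - x) ^ 2) := by
      linarith
    exact le_of_mul_le_mul_left hscaled hl0
  have hlim : Tendsto (fun l : ℝ => ψ x' - ψ x - K / 2 * (1 - l) * N (x' - x) ^ 2) (𝓝[>] 0)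
      (𝓝 (ψ x' - ψ x - K / 2 * N (x' - x) ^ 2)) := by
    refine tendsto_nhdsWithin_of_tendsto_nhds ?_
    have hcont : Continuous (fun l : ℝ => ψ x' - ψ x - K / 2 * (1 - l) * N (x' - x) ^ 2) := by
      fun_prop
    simpa using hcont.tendsto 0
  exact ge_of_tendsto hlim (mem_of_superset (Ioc_mem_nhdsGT zero_lt_one) hstep)

theorem mul_sub_half_mul_sq_le {K : ℝ} (hK : 0 < K) (a b : ℝ) :
    a * b - K / 2 * b ^ 2 ≤ 1 / (2 * K) * a ^ 2 := by
  have hsq : 1 / (2 * K) * a ^ 2 - (a * b - K / 2 * b ^ 2) = (a - K * b) ^ 2 / (2 * K) := by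
    field_simp; ring
  linarith [div_nonneg (sq_nonneg (a - K * b)) (by positivity : (0:ℝ) ≤ 2 * K)]

theorem fenchel_coupling_upper_bound_general {D : ℕ}
    (X : Set (EuclideanSpace ℝ (Fin D)))
    (hXconv : Convex ℝ X)
    (N : EuclideanSpace ℝ (Fin D) → ℝ)
    (hN_add : ∀ x y, N (x + y) ≤ N x + N y)
    (hN_smul : ∀ (a : ℝ) x, N (a • x) = |a| * N x)
    (hN_pos : ∀ x, x ≠ 0 → 0 < N x)
    -- the dual norm of N
    (Nd : EuclideanSpace ℝ (Fin D) → ℝ)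
    (hNd : ∀ z, Nd z = sSup ((fun x => ⟪z, x⟫_ℝ) '' {x | N x ≤ 1}))
    (K : ℝ) (hK : 0 < K)
    (ψ : EuclideanSpace ℝ (Fin D) → ℝ)
    (hψsc : ∀ x ∈ X, ∀ y ∈ X, ∀ l ∈ Set.Icc (0:ℝ) 1,
      ψ (l • x + (1 - l) • y) ≤ l * ψ x + (1 - l) * ψ y - K / 2 * l * (1 - l) * (N (x - y))^2)
    (Φ : EuclideanSpace ℝ (Fin D) → EuclideanSpace ℝ (Fin D))
    (hΦ : ∀ y, Φ y ∈ X ∧ ∀ x ∈ X, ⟪y, x⟫_ℝ - ψ x ≤ ⟪y, Φ y⟫_ℝ - ψ (Φ y))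
    (ψs : EuclideanSpace ℝ (Fin D) → ℝ)
    (hψs : ∀ y, ψs y = ⟪y, Φ y⟫_ℝ - ψ (Φ y))
    -- the Fenchel coupling
    (F : EuclideanSpace ℝ (Fin D) → EuclideanSpace ℝ (Fin D) → ℝ)
    (hF : ∀ p y, F p y = ψ p + ψs y - ⟪p, y⟫_ℝ) :
    ∀ p ∈ X, ∀ y y',
      F p y' ≤ F p y + ⟪y' - y, Φ y - p⟫_ℝ + 1 / (2 * K) * (Nd (y' - y))^2 := by
  intro p _ y y'
  let q : Seminorm ℝ (EuclideanSpace ℝ (Fin D)) := Seminorm.of N hN_add hN_smul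
  have hopt := inner_sub_le_of_isMaxOn hXconv hψsc (hΦ y).1 (isMaxOn_iff.2 (hΦ y).2) (hΦ y').1
  have hpair : ⟪y' - y, Φ y' - Φ y⟫_ℝ ≤ Nd (y' - y) * N (Φ y' - Φ y) := by
    rw [hNd]; exact q.inner_le_dualNorm_mul hN_pos _ _
  have hyoung := mul_sub_half_mul_sq_le hK (Nd (y' - y)) (N (Φ y' - Φ y))
  rw [hF, hF, hψs, hψs]
  simp only [inner_sub_left, inner_sub_right, real_inner_comm p] at *
  linarith

/-- Second Fenchel coupling inequality:
`F(p,y') ≤ F(p,y) + ⟪y' - y, Φ(y) - p⟫ + (1/(2K))‖y' - y‖²_*`. -/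
theorem fenchel_coupling_upper_bound {D : ℕ}
    (X : Set (EuclideanSpace ℝ (Fin D)))
    (hXne : X.Nonempty) (hXc : IsCompact X) (hXconv : Convex ℝ X)
    (N : EuclideanSpace ℝ (Fin D) → ℝ)
    (hN_add : ∀ x y, N (x + y) ≤ N x + N y)
    (hN_smul : ∀ (a : ℝ) x, N (a • x) = |a| * N x)
    (hN_pos : ∀ x, x ≠ 0 → 0 < N x)
    -- the dual norm of N
    (Nd : EuclideanSpace ℝ (Fin D) → ℝ)
    (hNd : ∀ z, Nd z = sSup ((fun x => ⟪z, x⟫_ℝ) '' {x | N x ≤ 1}))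
    (K : ℝ) (hK : 0 < K)
    (ψ : EuclideanSpace ℝ (Fin D) → ℝ) (hψcont : ContinuousOn ψ X)
    (hψsc : ∀ x ∈ X, ∀ y ∈ X, ∀ l ∈ Set.Icc (0:ℝ) 1,
      ψ (l • x + (1 - l) • y) ≤ l * ψ x + (1 - l) * ψ y - K / 2 * l * (1 - l) * (N (x - y))^2)
    (Φ : EuclideanSpace ℝ (Fin D) → EuclideanSpace ℝ (Fin D))
    (hΦ : ∀ y, Φ y ∈ X ∧ ∀ x ∈ X, ⟪y, x⟫_ℝ - ψ x ≤ ⟪y, Φ y⟫_ℝ - ψ (Φ y))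
    (ψs : EuclideanSpace ℝ (Fin D) → ℝ)
    (hψs : ∀ y, ψs y = ⟪y, Φ y⟫_ℝ - ψ (Φ y))
    -- the Fenchel coupling
    (F : EuclideanSpace ℝ (Fin D) → EuclideanSpace ℝ (Fin D) → ℝ)
    (hF : ∀ p y, F p y = ψ p + ψs y - ⟪p, y⟫_ℝ) :
    ∀ p ∈ X, ∀ y y',
      F p y' ≤ F p y + ⟪y' - y, Φ y - p⟫_ℝ + 1 / (2 * K) * (Nd (y' - y))^2 :=
  fenchel_coupling_upper_bound_general X hXconv N hN_add hN_smul hN_pos Nd hNd K hK ψ hψsc Φ hΦ ψs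
    hψs F hF
end

section
/- Let X = Π_{i=1}^N X_i be a product of nonempty compact convex sets, Q = X ∩ {x : Ax ≤ b} nonempty, and suppose each u_i(·, x^{(-i)}) is concave with v(x) = (∇_{x^{(i)}} u_i(x))_i continuous. If x̄ ∈ Q satisfies ⟨x - x̄, v(x̄)⟩ ≤ 0 for all x ∈ Q, then x̄ is a generalized Nash equilibrium: for every player i, u_i(x̄) ≥ u_i(x^{(i)}, x̄^{(-i)}) for all x^{(i)} ∈ X_i with A(x^{(i)}, x̄^{(-i)}) ≤ b. -/
open scoped InnerProductSpace

/-!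
A solution `x̄` of the variational inequality may be tested against the feasible point in which
only player `i` deviates, giving `⟪xᵢ - x̄ᵢ, vᵢ(x̄)⟫ ≤ 0`. Concavity of `uᵢ` in its own variable
bounds the gain of that deviation by the same first-order term, so it is not profitable.
-/

theorem ConcaveOn.sub_le_fderiv_apply_sub {E : Type*} [NormedAddCommGroup E] [NormedSpace ℝ E]
    {s : Set E} {f : E → ℝ} {f' : E →L[ℝ] ℝ} {x y : E} (hf : ConcaveOn ℝ s f)
    (hx : x ∈ s) (hy : y ∈ s) (hf' : HasFDerivAt f f' x) :
    f y - f x ≤ f' (y - x) := by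
  let ℓ : ℝ →ᵃ[ℝ] E := AffineMap.lineMap x y
  have hconc : ConcaveOn ℝ (ℓ ⁻¹' s) (f ∘ ℓ) := hf.comp_affineMap ℓ
  have hderiv : HasDerivAt (f ∘ ℓ) (f' (y - x)) 0 := by
    have hf'0 : HasFDerivAt f f' (ℓ 0) := by simpa [ℓ] using hf'
    simpa [ℓ] using hf'0.comp_hasDerivAt (0 : ℝ) AffineMap.hasDerivAt_lineMap
  simpa [ℓ, slope_def_field] using
    hconc.slope_le_of_hasDerivAt (by simpa [ℓ] using hx) (by simpa [ℓ] using hy) one_pos hderiv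

theorem ConcaveOn.sub_le_inner_gradient {E : Type*} [NormedAddCommGroup E]
    [InnerProductSpace ℝ E] [CompleteSpace E] {s : Set E} {f : E → ℝ} {g x y : E}
    (hf : ConcaveOn ℝ s f) (hx : x ∈ s) (hy : y ∈ s) (hg : HasGradientAt f g x) :
    f y - f x ≤ ⟪g, y - x⟫_ℝ := by
  simpa using hf.sub_le_fderiv_apply_sub hx hy hg.hasFDerivAt

theorem Finset.sum_inner_update_sub {ι : Type*} [Fintype ι] [DecidableEq ι] {E : ι → Type*}
    [∀ j, NormedAddCommGroup (E j)] [∀ j, InnerProductSpace ℝ (E j)]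
    (x w : ∀ j, E j) (i : ι) (y : E i) :
    ∑ j, ⟪Function.update x i y j - x j, w j⟫_ℝ = ⟪y - x i, w i⟫_ℝ := by
  rw [Finset.sum_eq_single i (fun j _ hj => by simp [Function.update_of_ne hj]) (by simp),
    Function.update_self]

theorem sol_vi_is_generalized_nash_general {n : ℕ} {Dim : Fin n → ℕ} {M : ℕ}
    -- strategy sets
    (X : ∀ i, Set (EuclideanSpace ℝ (Fin (Dim i))))
    -- payoffs and partial gradients
    (u : Fin n → (∀ i, EuclideanSpace ℝ (Fin (Dim i))) → ℝ)
    (v : ∀ i, (∀ j, EuclideanSpace ℝ (Fin (Dim j))) → EuclideanSpace ℝ (Fin (Dim i)))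
    (hconc : ∀ i, ∀ x, ConcaveOn ℝ (X i) (fun xi => u i (Function.update x i xi)))
    (hgrad : ∀ i, ∀ x : ∀ j, EuclideanSpace ℝ (Fin (Dim j)),
      HasGradientAt (fun xi => u i (Function.update x i xi)) (v i x) (x i))
    -- affine coupling constraint A x ≤ b (block form)
    (A : ∀ i, Fin M → EuclideanSpace ℝ (Fin (Dim i)) →ₗ[ℝ] ℝ) (b : Fin M → ℝ)
    -- a solution of VI(Q, v)
    (xb : ∀ j, EuclideanSpace ℝ (Fin (Dim j)))
    (hxbX : ∀ i, xb i ∈ X i)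
    (hvi : ∀ x : ∀ j, EuclideanSpace ℝ (Fin (Dim j)),
      (∀ i, x i ∈ X i) → (∀ m, (∑ i, A i m (x i)) ≤ b m) →
      (∑ i, ⟪x i - xb i, v i xb⟫_ℝ) ≤ 0) :
    -- generalized Nash equilibrium
    ∀ i, ∀ xi ∈ X i, (∀ m, (∑ j, A j m (Function.update xb i xi j)) ≤ b m) →
      u i (Function.update xb i xi) ≤ u i xb := by
  intro i xi hxi hfeas
  have hdev_mem : ∀ j, Function.update xb i xi j ∈ X j := fun j =>
    (Set.update_mem_pi_iff_of_mem (s := Set.univ) (fun j _ => hxbX j)).2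
      (fun _ => hxi) j (Set.mem_univ j)
  have hfirst_order : ⟪xi - xb i, v i xb⟫_ℝ ≤ 0 := by
    simpa only [Finset.sum_inner_update_sub] using hvi _ hdev_mem hfeas
  have hgain := (hconc i xb).sub_le_inner_gradient (hxbX i) hxi (hgrad i xb)
  rw [Function.update_eq_self, real_inner_comm] at hgain
  linarith

/-- In a concave game with coupled affine constraints, a solution of the
variational inequality `VI(Q, v)` is a generalized Nash equilibrium. -/
theorem sol_vi_is_generalized_nash {n : ℕ} {Dim : Fin n → ℕ} {M : ℕ}
    -- strategy sets
    (X : ∀ i, Set (EuclideanSpace ℝ (Fin (Dim i))))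
    (hXne : ∀ i, (X i).Nonempty) (hXc : ∀ i, IsCompact (X i))
    (hXconv : ∀ i, Convex ℝ (X i))
    -- payoffs and partial gradients
    (u : Fin n → (∀ i, EuclideanSpace ℝ (Fin (Dim i))) → ℝ)
    (v : ∀ i, (∀ j, EuclideanSpace ℝ (Fin (Dim j))) → EuclideanSpace ℝ (Fin (Dim i)))
    (hconc : ∀ i, ∀ x, ConcaveOn ℝ (X i) (fun xi => u i (Function.update x i xi)))
    (hgrad : ∀ i, ∀ x : ∀ j, EuclideanSpace ℝ (Fin (Dim j)),
      HasGradientAt (fun xi => u i (Function.update x i xi)) (v i x) (x i))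
    (hvcont : ∀ i, Continuous (v i))
    -- affine coupling constraint A x ≤ b (block form)
    (A : ∀ i, Fin M → EuclideanSpace ℝ (Fin (Dim i)) →ₗ[ℝ] ℝ) (b : Fin M → ℝ)
    -- Q nonempty
    (hQne : ∃ x : ∀ j, EuclideanSpace ℝ (Fin (Dim j)),
      (∀ i, x i ∈ X i) ∧ ∀ m, (∑ i, A i m (x i)) ≤ b m)
    -- a solution of VI(Q, v)
    (xb : ∀ j, EuclideanSpace ℝ (Fin (Dim j)))
    (hxbX : ∀ i, xb i ∈ X i) (hxbC : ∀ m, (∑ i, A i m (xb i)) ≤ b m)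
    (hvi : ∀ x : ∀ j, EuclideanSpace ℝ (Fin (Dim j)),
      (∀ i, x i ∈ X i) → (∀ m, (∑ i, A i m (x i)) ≤ b m) →
      (∑ i, ⟪x i - xb i, v i xb⟫_ℝ) ≤ 0) :
    -- generalized Nash equilibrium
    ∀ i, ∀ xi ∈ X i, (∀ m, (∑ j, A j m (Function.update xb i xi j)) ≤ b m) →
      u i (Function.update xb i xi) ≤ u i xb :=
  sol_vi_is_generalized_nash_general X u v hconc hgrad A b xb hxbX hvi
end

section
/- Let X ⊆ ℝ^D be nonempty compact convex, v : X → ℝ^D continuous, A ∈ ℝ^{M×D}, b ∈ ℝ^M, Q = {x ∈ X : Ax ≤ b}, and suppose Slater's condition holds: there exists x* in the relative interior of X with Ax* < b componentwise. Define ṽ(x,λ) = (v(x) - Aᵀλ, Ax - b) on X × ℝ^M_{≥0}. Then x̄ ∈ Q solves VI(Q, v) if and only if there exists λ̄ ∈ ℝ^M_{≥0} such that (x̄, λ̄) solves VI(X × ℝ^M_{≥0}, ṽ). -/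
/-!
Separating the convex set `{y | ∃ x ∈ X, h x ≤ y}` from the open negative orthant gives the
Fan–Glicksberg–Hoffman alternative. Applied to the linearised VI objective `⟨x̄ - x, v x̄⟩` and
the constraints `A x - b`, with Slater's point forcing a positive weight on the objective, it
produces a multiplier `λ ≥ 0` for which the Lagrangian is nonnegative on `X`. At `x = x̄` this gives
complementary slackness `⟨λ, A x̄ - b⟩ = 0`, which turns the Lagrangian inequality into the
extended VI; conversely, testing the extended VI at `μ = 0` and at `μ = λ` recovers `VI(Q, v)`.
-/

open Finset

theorem exists_nonneg_ne_zero_sum_mul_nonneg_of_convexOn {E κ : Type*} [AddCommGroup E]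
    [Module ℝ E] [Fintype κ] {X : Set E} (hX : Convex ℝ X)
    (hXne : X.Nonempty) {h : κ → E → ℝ} (hh : ∀ k, ConvexOn ℝ X (h k))
    (hneg : ¬ ∃ x ∈ X, ∀ k, h k x < 0) :
    ∃ c : κ → ℝ, 0 ≤ c ∧ c ≠ 0 ∧ ∀ x ∈ X, 0 ≤ ∑ k, c k * h k x := by
  classical
  set N : Set (κ → ℝ) := Set.univ.pi fun _ => Set.Iic 0
  set S : Set (κ → ℝ) := {y | ∃ x ∈ X, ∀ k, h k x ≤ y k}
  have hN : Convex ℝ N := convex_pi fun _ _ => convex_Iic 0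
  have hS : Convex ℝ S := by
    rintro _ ⟨x₁, hx₁, hy₁⟩ _ ⟨x₂, hx₂, hy₂⟩ a b ha hb hab
    refine ⟨a • x₁ + b • x₂, hX hx₁ hx₂ ha hb hab, fun k => ?_⟩
    calc h k (a • x₁ + b • x₂) ≤ a • h k x₁ + b • h k x₂ :=
          (hh k).2 hx₁ hx₂ ha hb hab
      _ ≤ _ := by
        simp only [Pi.add_apply, Pi.smul_apply]
        gcongr
        exacts [hy₁ k, hy₂ k]
  have hintN : interior N = Set.univ.pi fun _ => Set.Iio 0 := by
    rw [interior_pi_set Set.finite_univ]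
    simp only [interior_Iic]
  have hdisj : Disjoint (interior N) S := by
    rw [hintN, Set.disjoint_left]
    rintro y hy ⟨x, hx, hxy⟩
    exact hneg ⟨x, hx, fun k => (hxy k).trans_lt (hy k trivial)⟩
  obtain ⟨φ, u, hφ, hφN, hφS⟩ := geometric_hahn_banach_of_nonempty_interior hN hS hdisj
    ⟨fun _ => -1, by rw [hintN]; intro k _; norm_num⟩
    (hXne.elim fun x hx => ⟨fun k => h k x, x, hx, fun _ => le_rfl⟩)
  set e : κ → κ → ℝ := fun k j => if k = j then 1 else 0
  set c : κ → ℝ := fun k => φ (e k)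
  have hφc : ∀ y, φ y = ∑ k, c k * y k := fun y => by
    simpa [mul_comm] using φ.toLinearMap.pi_apply_eq_sum_univ y
  have hu : 0 ≤ u := by simpa using hφN 0 fun _ _ => Set.mem_Iic.2 le_rfl
  have hc : 0 ≤ c := fun k => by
    by_contra! hk
    obtain ⟨n, hn⟩ := exists_lt_nsmul (neg_pos.2 hk) u
    have hmem : n • -e k ∈ N := fun j _ => by
      simp only [e, Pi.smul_apply, Pi.neg_apply, Set.mem_Iic]
      split_ifs <;> simp
    have := hφN _ hmem
    rw [map_nsmul, map_neg] at this
    exact (hn.trans_le this).false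
  refine ⟨c, hc, fun hc0 => hφ (ContinuousLinearMap.ext fun y => by simp [hφc, hc0]),
    fun x hx => ?_⟩
  have := hφS _ ⟨x, hx, fun _ => le_rfl⟩
  rw [hφc] at this
  linarith

theorem convexOn_sum_mul_add {ι : Type*} [Fintype ι] {s : Set (ι → ℝ)} (hs : Convex ℝ s)
    (c : ι → ℝ) (d : ℝ) : ConvexOn ℝ s fun x => ∑ i, c i * x i + d := by
  refine (((Fintype.linearCombination ℝ c).convexOn hs).add_const d).congr fun x _ => ?_
  simp [Fintype.linearCombination_apply, mul_comm]

theorem ConvexOn.exists_lagrange_multiplier {E ι : Type*} [AddCommGroup E] [Module ℝ E]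
    [Fintype ι] {X : Set E} (hX : Convex ℝ X) {f : E → ℝ} {g : ι → E → ℝ}
    (hf : ConvexOn ℝ X f) (hg : ∀ i, ConvexOn ℝ X (g i)) (hslater : ∃ x ∈ X, ∀ i, g i x < 0)
    (hfeas : ∀ x ∈ X, (∀ i, g i x ≤ 0) → 0 ≤ f x) :
    ∃ lam : ι → ℝ, 0 ≤ lam ∧ ∀ x ∈ X, 0 ≤ f x + ∑ i, lam i * g i x := by
  obtain ⟨xs, hxs, hgxs⟩ := hslater
  obtain ⟨c, hc, hc0, hsum⟩ := exists_nonneg_ne_zero_sum_mul_nonneg_of_convexOn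
    (h := fun o x => o.elim (f x) (g · x)) hX ⟨xs, hxs⟩
    (by rintro (_ | i) <;> [exact hf; exact hg i])
    (fun ⟨x, hx, hneg⟩ => (hfeas x hx fun i => (hneg (some i)).le).not_gt (hneg none))
  simp only [Fintype.sum_option, Option.elim] at hsum
  -- Slater's point rules out a vanishing weight on the objective.
  have hcf : 0 < c none := by
    refine (hc none).lt_of_ne fun hnone => hc0 ?_
    have hterm : ∀ i ∈ univ, c (some i) * g i xs ≤ 0 :=
      fun i _ => mul_nonpos_of_nonneg_of_nonpos (hc _) (hgxs i).le
    have hzero := (sum_eq_zero_iff_of_nonpos hterm).1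
      (le_antisymm (sum_nonpos hterm) (by simpa [← hnone] using hsum xs hxs))
    funext o
    rcases o with _ | i
    · exact hnone.symm
    · simpa [(hgxs i).ne] using hzero i (mem_univ i)
  refine ⟨fun i => c (some i) / c none, fun i => div_nonneg (hc _) hcf.le, fun x hx => ?_⟩
  refine nonneg_of_mul_nonneg_right ?_ hcf
  calc 0 ≤ _ := hsum x hx
    _ = _ := by
      rw [mul_add, mul_sum]
      congr 1
      exact sum_congr rfl fun i _ => by field_simp

theorem lagrangian_pairing_eq {ι κ : Type*} [Fintype ι] [Fintype κ] (A : Matrix κ ι ℝ)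
    (b : κ → ℝ) (w x xb : ι → ℝ) (lam mu : κ → ℝ) :
    (∑ j, (x j - xb j) * (w j - ∑ m, A m j * lam m)) +
        ∑ m, (mu m - lam m) * ((∑ j, A m j * xb j) - b m) =
      (∑ j, (x j - xb j) * w j) - ∑ m, lam m * ((∑ j, A m j * x j) - b m) +
        ∑ m, mu m * ((∑ j, A m j * xb j) - b m) := by
  simp only [mul_sub, sub_mul, sum_sub_distrib, mul_sum]
  rw [sum_comm (f := fun j m => x j * (A m j * lam m)),
    sum_comm (f := fun j m => xb j * (A m j * lam m))]
  simp only [mul_comm, mul_left_comm]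
  ring

theorem vi_lagrangian_decoupling_general {D M : ℕ}
    (X : Set (Fin D → ℝ))
    (hXconv : Convex ℝ X)
    (v : (Fin D → ℝ) → Fin D → ℝ)
    (A : Matrix (Fin M) (Fin D) ℝ) (b : Fin M → ℝ)
    -- Slater's condition
    (hSlater : ∃ xs ∈ intrinsicInterior ℝ X, ∀ m, (∑ j, A m j * xs j) < b m)
    -- xb ∈ Q
    (xb : Fin D → ℝ) (hxbX : xb ∈ X) (hxbC : ∀ m, (∑ j, A m j * xb j) ≤ b m) :
    -- xb solves VI(Q, v) ...
    (∀ x ∈ X, (∀ m, (∑ j, A m j * x j) ≤ b m) →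
        (∑ j, (x j - xb j) * v xb j) ≤ 0)
    ↔ -- ... iff (xb, lam) solves VI(X × ℝ^M_{≥0}, ṽ) for some lam ≥ 0
    (∃ lam : Fin M → ℝ, (∀ m, 0 ≤ lam m) ∧
      ∀ x ∈ X, ∀ mu : Fin M → ℝ, (∀ m, 0 ≤ mu m) →
        (∑ j, (x j - xb j) * (v xb j - ∑ m, A m j * lam m)) +
          (∑ m, (mu m - lam m) * ((∑ j, A m j * xb j) - b m)) ≤ 0) := by
  have hweighted : ∀ lam : Fin M → ℝ, (∀ m, 0 ≤ lam m) → ∀ x : Fin D → ℝ,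
      (∀ m, (∑ j, A m j * x j) ≤ b m) → ∑ m, lam m * ((∑ j, A m j * x j) - b m) ≤ 0 :=
    fun lam hlam x hx =>
    sum_nonpos fun m _ => mul_nonpos_of_nonneg_of_nonpos (hlam m) (sub_nonpos.2 (hx m))
  constructor
  · intro hVI
    obtain ⟨xs, hxs, hslater⟩ := hSlater
    have hobj : ConvexOn ℝ X fun x => -∑ j, (x j - xb j) * v xb j := by
      refine (convexOn_sum_mul_add hXconv (fun j => -v xb j) (∑ j, xb j * v xb j)).congr
        fun x _ => ?_
      simp only [neg_mul, sum_neg_distrib, sub_mul, sum_sub_distrib, mul_comm (v xb _) (x _)]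
      ring
    obtain ⟨lam, hlam, hdual⟩ := hobj.exists_lagrange_multiplier hXconv
      (g := fun m x => ∑ j, A m j * x j - b m)
      (fun m => convexOn_sum_mul_add hXconv (A m) (-b m) |>.congr fun x _ => by ring)
      ⟨xs, intrinsicInterior_subset hxs, fun m => sub_neg.2 (hslater m)⟩
      (fun x hx hQ => neg_nonneg.2 (hVI x hx fun m => sub_nonpos.1 (hQ m)))
    have hslack : ∑ m, lam m * ((∑ j, A m j * xb j) - b m) = 0 :=
      le_antisymm (hweighted lam hlam xb hxbC) (by simpa using hdual xb hxbX)
    refine ⟨lam, hlam, fun x hx mu hmu => ?_⟩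
    rw [lagrangian_pairing_eq]
    linarith [hdual x hx, hweighted mu hmu xb hxbC]
  · rintro ⟨lam, hlam, hVI⟩ x hx hQ
    have hxb := hVI xb hxbX 0 fun _ => le_rfl
    have hx := hVI x hx lam hlam
    rw [lagrangian_pairing_eq] at hxb hx
    simp only [sub_self, zero_mul, sum_const_zero, Pi.zero_apply] at hxb hx
    linarith [hweighted lam hlam x hQ]

/-- Under Slater's condition, `xb ∈ Q` solves `VI(Q, v)` iff there is a
nonnegative multiplier `lam` such that `(xb, lam)` solves the extended variational
inequality `VI(X × ℝ^M_{≥0}, ṽ)` with `ṽ(x, λ) = (v(x) - Aᵀλ, Ax - b)`. -/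
theorem vi_lagrangian_decoupling {D M : ℕ}
    (X : Set (Fin D → ℝ))
    (hXne : X.Nonempty) (hXc : IsCompact X) (hXconv : Convex ℝ X)
    (v : (Fin D → ℝ) → Fin D → ℝ) (hv : ContinuousOn v X)
    (A : Matrix (Fin M) (Fin D) ℝ) (b : Fin M → ℝ)
    -- Slater's condition
    (hSlater : ∃ xs ∈ intrinsicInterior ℝ X, ∀ m, (∑ j, A m j * xs j) < b m)
    -- xb ∈ Q
    (xb : Fin D → ℝ) (hxbX : xb ∈ X) (hxbC : ∀ m, (∑ j, A m j * xb j) ≤ b m) :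
    -- xb solves VI(Q, v) ...
    (∀ x ∈ X, (∀ m, (∑ j, A m j * x j) ≤ b m) →
        (∑ j, (x j - xb j) * v xb j) ≤ 0)
    ↔ -- ... iff (xb, lam) solves VI(X × ℝ^M_{≥0}, ṽ) for some lam ≥ 0
    (∃ lam : Fin M → ℝ, (∀ m, 0 ≤ lam m) ∧
      ∀ x ∈ X, ∀ mu : Fin M → ℝ, (∀ m, 0 ≤ mu m) →
        (∑ j, (x j - xb j) * (v xb j - ∑ m, A m j * lam m)) +
          (∑ m, (mu m - lam m) * ((∑ j, A m j * xb j) - b m)) ≤ 0) :=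
  vi_lagrangian_decoupling_general X hXconv v A b hSlater xb hxbX hxbC
end

section
/- Let (x̄, λ̄) ∈ X × ℝ^M_{≥0} solve the extended variational inequality VI(X × ℝ^M_{≥0}, ṽ), where ṽ(x,λ) = (v(x) - Aᵀλ, Ax - b). Then x̄ ∈ Q = {x ∈ X : Ax ≤ b}, ⟨λ̄, Ax̄ - b⟩ = 0 (complementary slackness), and x̄ solves VI(Q, v). -/
/-!
Testing the extended inequality at `x = x̄` shows that `λ̄` maximises `μ ↦ ⟨μ, Ax̄ - b⟩` over the
nonnegative orthant, which forces `Ax̄ ≤ b` and `⟨λ̄, Ax̄ - b⟩ = 0`. Testing it at `μ = λ̄` and a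
feasible `x` gives `⟨x - x̄, v(x̄)⟩ ≤ ⟨x - x̄, Aᵀλ̄⟩ = ⟨λ̄, Ax - b⟩ - ⟨λ̄, Ax̄ - b⟩ ≤ 0`.
-/

open Matrix

theorem nonpos_and_dotProduct_eq_zero_of_forall_sub_dotProduct_nonpos {ι : Type*} [Fintype ι]
    [DecidableEq ι] {lam g : ι → ℝ} (hlam : 0 ≤ lam)
    (hmax : ∀ mu : ι → ℝ, 0 ≤ mu → (mu - lam) ⬝ᵥ g ≤ 0) :
    g ≤ 0 ∧ lam ⬝ᵥ g = 0 := by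
  have hg : g ≤ 0 := fun i => by
    have h := hmax (lam + Pi.single i 1) (add_nonneg hlam (Pi.single_nonneg.mpr zero_le_one))
    simpa [single_dotProduct] using h
  refine ⟨hg, le_antisymm ?_ ?_⟩
  · exact Finset.sum_nonpos fun i _ => mul_nonpos_of_nonneg_of_nonpos (hlam i) (hg i)
  · simpa using hmax 0 le_rfl

theorem sub_dotProduct_transpose_mulVec_nonpos {m n : Type*} [Fintype m] [Fintype n]
    (A : Matrix m n ℝ) {b lam : m → ℝ} {x xb : n → ℝ} (hlam : 0 ≤ lam) (hx : A *ᵥ x ≤ b)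
    (hcs : lam ⬝ᵥ (A *ᵥ xb - b) = 0) :
    (x - xb) ⬝ᵥ (Aᵀ *ᵥ lam) ≤ 0 := by
  have hsplit : (x - xb) ⬝ᵥ (Aᵀ *ᵥ lam) = lam ⬝ᵥ (A *ᵥ x - b) - lam ⬝ᵥ (A *ᵥ xb - b) := by
    rw [dotProduct_mulVec, vecMul_transpose, dotProduct_comm, ← dotProduct_sub, mulVec_sub]
    congr 1
    abel
  rw [hsplit, hcs, sub_zero]
  exact Finset.sum_nonpos fun i _ =>
    mul_nonpos_of_nonneg_of_nonpos (hlam i) (sub_nonpos.mpr (hx i))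

theorem extended_vi_solution_properties_general {D M : ℕ}
    (X : Set (Fin D → ℝ))
    (v : (Fin D → ℝ) → Fin D → ℝ)
    (A : Matrix (Fin M) (Fin D) ℝ) (b : Fin M → ℝ)
    (xb : Fin D → ℝ) (lam : Fin M → ℝ)
    (hxbX : xb ∈ X) (hlam : ∀ m, 0 ≤ lam m)
    -- (xb, lam) solves the extended VI
    (hvi : ∀ x ∈ X, ∀ mu : Fin M → ℝ, (∀ m, 0 ≤ mu m) →
      (∑ j, (x j - xb j) * (v xb j - ∑ m, A m j * lam m)) +
        (∑ m, (mu m - lam m) * ((∑ j, A m j * xb j) - b m)) ≤ 0) :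
    -- feasibility
    (∀ m, (∑ j, A m j * xb j) ≤ b m) ∧
    -- complementary slackness
    (∑ m, lam m * ((∑ j, A m j * xb j) - b m)) = 0 ∧
    -- xb solves VI(Q, v)
    (∀ x ∈ X, (∀ m, (∑ j, A m j * x j) ≤ b m) →
      (∑ j, (x j - xb j) * v xb j) ≤ 0) := by
  have hvi' : ∀ x ∈ X, ∀ mu : Fin M → ℝ, 0 ≤ mu →
      (x - xb) ⬝ᵥ (v xb - Aᵀ *ᵥ lam) + (mu - lam) ⬝ᵥ (A *ᵥ xb - b) ≤ 0 := hvi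
  obtain ⟨hfeas, hcs⟩ : A *ᵥ xb - b ≤ 0 ∧ lam ⬝ᵥ (A *ᵥ xb - b) = 0 :=
    nonpos_and_dotProduct_eq_zero_of_forall_sub_dotProduct_nonpos hlam fun mu hmu => by
      simpa using hvi' xb hxbX mu hmu
  refine ⟨fun m => sub_nonpos.mp (hfeas m), hcs, fun x hx hxQ => ?_⟩
  have hlagr : (x - xb) ⬝ᵥ (v xb - Aᵀ *ᵥ lam) ≤ 0 := by
    simpa using hvi' x hx lam hlam
  have hmult : (x - xb) ⬝ᵥ (Aᵀ *ᵥ lam) ≤ 0 :=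
    sub_dotProduct_transpose_mulVec_nonpos A hlam hxQ hcs
  show (x - xb) ⬝ᵥ v xb ≤ 0
  rw [dotProduct_sub] at hlagr
  linarith

/-- If `(xb, lam)` solves the extended variational inequality
`VI(X × ℝ^M_{≥0}, ṽ)` with `ṽ(x, λ) = (v(x) - Aᵀλ, Ax - b)`, then `xb` is feasible,
complementary slackness holds, and `xb` solves `VI(Q, v)`. -/
theorem extended_vi_solution_properties {D M : ℕ}
    (X : Set (Fin D → ℝ))
    (hXne : X.Nonempty) (hXc : IsCompact X) (hXconv : Convex ℝ X)
    (v : (Fin D → ℝ) → Fin D → ℝ)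
    (A : Matrix (Fin M) (Fin D) ℝ) (b : Fin M → ℝ)
    (xb : Fin D → ℝ) (lam : Fin M → ℝ)
    (hxbX : xb ∈ X) (hlam : ∀ m, 0 ≤ lam m)
    -- (xb, lam) solves the extended VI
    (hvi : ∀ x ∈ X, ∀ mu : Fin M → ℝ, (∀ m, 0 ≤ mu m) →
      (∑ j, (x j - xb j) * (v xb j - ∑ m, A m j * lam m)) +
        (∑ m, (mu m - lam m) * ((∑ j, A m j * xb j) - b m)) ≤ 0) :
    -- feasibility
    (∀ m, (∑ j, A m j * xb j) ≤ b m) ∧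
    -- complementary slackness
    (∑ m, lam m * ((∑ j, A m j * xb j) - b m)) = 0 ∧
    -- xb solves VI(Q, v)
    (∀ x ∈ X, (∀ m, (∑ j, A m j * x j) ≤ b m) →
      (∑ j, (x j - xb j) * v xb j) ≤ 0) :=
  extended_vi_solution_properties_general X v A b xb lam hxbX hlam hvi
end
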